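/- The function d_p(x,y) := (1 − |⟨x,y⟩|^p/(‖x‖^p‖y‖^p))^{1/p}, defined for nonzero vectors of a complex inner product space and fixed real p ≥ 2, satisfies the triangle inequality: for any nonzero x, y, z, |d_p(x,e) − d_p(y,e)| ≤ d_p(x,y) for any unit vector e; in particular, taking e a unit vector, (1 − |⟨x,e⟩|^p/‖x‖^p)^{1/p} − (1 − |⟨y,e⟩|^p/‖y‖^p)^{1/p} ≤ (1 − |⟨x,y⟩|^p/(‖x‖^p‖y‖^p))^{1/p}. -/

import Mathlib

open scoped ComplexConjugate
local notation "⟪" x ", " y "⟫" => @inner ℂ _ _ x y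


open Real

-- Bernoulli consequence
lemma bern {p u : ℝ} (hp : 2 ≤ p) (hu : 0 ≤ u) (hu1 : u ≤ 1) :
    1 - u ^ p ≤ (p / 2) * (1 - u ^ 2) := by
  have h1 : (1:ℝ) + (p/2) * (u^2 - 1) ≤ (1 + (u^2 - 1)) ^ (p/2) := by
    apply one_add_mul_self_le_rpow_one_add (by nlinarith) (by linarith)
  have h2 : (1 + (u^2 - 1)) ^ (p/2) = u ^ p := by
    have : (1:ℝ) + (u^2-1) = u^2 := by ring
    rw [this, ← Real.rpow_natCast u 2, ← Real.rpow_mul hu]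
    congr 1; push_cast; ring
  rw [h2] at h1
  linarith

lemma key_poly {p u : ℝ} (hp : 2 ≤ p) (hu : 0 < u) (hu1 : u < 1) :
    0 ≤ (p - 1) * (1 - u ^ 2) - u ^ 2 * (1 - u ^ p) := by
  have hb := bern hp hu.le hu1.le
  have hup : u ^ p ≤ 1 := Real.rpow_le_one hu.le hu1.le (by linarith)
  nlinarith [sq_nonneg u, sq_nonneg (1-u)]

noncomputable def phi (p : ℝ) : ℝ → ℝ := fun u =>
  (p - 1) * Real.log u + (1/2) * Real.log (1 - u ^ 2) - ((p-1)/p) * Real.log (1 - u ^ p)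

lemma phi_hasDeriv {p u : ℝ} (hp : 2 ≤ p) (hu : 0 < u) (hu1 : u < 1) :
    HasDerivAt (phi p)
      (((p - 1) * (1 - u ^ 2) - u ^ 2 * (1 - u ^ p)) / (u * (1 - u ^ 2) * (1 - u ^ p))) u := by
  have hp0 : (0:ℝ) < p := by linarith
  have hu2 : (0:ℝ) < 1 - u ^ 2 := by nlinarith
  have hup : u ^ p < 1 := Real.rpow_lt_one hu.le hu1 hp0
  have hupp : (0:ℝ) < 1 - u ^ p := by linarith
  have d1 : HasDerivAt (fun v : ℝ => Real.log v) u⁻¹ u := Real.hasDerivAt_log hu.ne'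
  have d2 : HasDerivAt (fun v : ℝ => 1 - v ^ 2) (-(2 * u)) u := by
    simpa using ((hasDerivAt_pow 2 u).const_sub 1)
  have d3 : HasDerivAt (fun v : ℝ => Real.log (1 - v ^ 2)) (-(2 * u) / (1 - u ^ 2)) u :=
    d2.log hu2.ne'
  have d4 : HasDerivAt (fun v : ℝ => 1 - v ^ p) (-(p * u ^ (p - 1))) u := by
    simpa using ((Real.hasDerivAt_rpow_const (p := p) (Or.inl hu.ne')).const_sub 1)
  have d5 : HasDerivAt (fun v : ℝ => Real.log (1 - v ^ p)) (-(p * u ^ (p-1)) / (1 - u ^ p)) u :=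
    d4.log hupp.ne'
  have D := ((d1.const_mul (p-1)).add (d3.const_mul (1/2))).sub (d5.const_mul ((p-1)/p))
  refine D.congr_deriv ?_
  rw [Real.rpow_sub hu, Real.rpow_one]
  field_simp
  ring

lemma phi_mono {p : ℝ} (hp : 2 ≤ p) : MonotoneOn (phi p) (Set.Ioo 0 1) := by
  have hcv : Convex ℝ (Set.Ioo (0:ℝ) 1) := convex_Ioo 0 1
  apply monotoneOn_of_deriv_nonneg hcv
  · exact fun u hu => ((phi_hasDeriv hp hu.1 hu.2).continuousAt).continuousWithinAt
  · rw [interior_Ioo]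
    exact fun u hu => ((phi_hasDeriv hp hu.1 hu.2).differentiableAt).differentiableWithinAt
  · rw [interior_Ioo]
    intro u hu
    rw [(phi_hasDeriv hp hu.1 hu.2).deriv]
    have hu2 : (0:ℝ) < 1 - u ^ 2 := by nlinarith [hu.1, hu.2]
    have hup : u ^ p < 1 := Real.rpow_lt_one hu.1.le hu.2 (by linarith)
    exact div_nonneg (key_poly hp hu.1 hu.2)
      (le_of_lt (mul_pos (mul_pos hu.1 hu2) (by linarith)))

noncomputable def gfun (p : ℝ) : ℝ → ℝ := fun θ => (1 - Real.cos θ ^ p) ^ (1/p)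

lemma g_hasDeriv {p θ : ℝ} (hp : 2 ≤ p) (hθ : θ ∈ Set.Ioo 0 (Real.pi/2)) :
    HasDerivAt (gfun p)
      (Real.sin θ * Real.cos θ ^ (p - 1) * (1 - Real.cos θ ^ p) ^ (1/p - 1)) θ := by
  have hp0 : (0:ℝ) < p := by linarith
  have hc0 : 0 < Real.cos θ := Real.cos_pos_of_mem_Ioo
    ⟨by linarith [hθ.1, Real.pi_pos], hθ.2⟩
  have hc1 : Real.cos θ < 1 := by
    have := Real.strictAntiOn_cos (Set.left_mem_Icc.2 Real.pi_pos.le)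
      ⟨hθ.1.le, by linarith [hθ.2, Real.pi_pos]⟩ hθ.1
    simpa using this
  have hcp : Real.cos θ ^ p < 1 := Real.rpow_lt_one hc0.le hc1 hp0
  have d1 : HasDerivAt (fun t : ℝ => 1 - Real.cos t ^ p)
      (Real.sin θ * p * Real.cos θ ^ (p-1)) θ := by
    have := (Real.hasDerivAt_cos θ).rpow_const (p := p) (Or.inl hc0.ne')
    simpa using (this.const_sub 1)
  have D := d1.rpow_const (p := 1/p) (Or.inl (by linarith : (1:ℝ) - Real.cos θ ^ p ≠ 0))
  refine D.congr_deriv ?_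
  field_simp

lemma exp_phi {p u : ℝ} (hp : 2 ≤ p) (hu : 0 < u) (hu1 : u < 1) :
    Real.exp (phi p u) = u ^ (p - 1) * Real.sqrt (1 - u ^ 2) * (1 - u ^ p) ^ (1/p - 1) := by
  have hp0 : (0:ℝ) < p := by linarith
  have hu2 : (0:ℝ) < 1 - u ^ 2 := by nlinarith
  have hup : u ^ p < 1 := Real.rpow_lt_one hu.le hu1 hp0
  have hupp : (0:ℝ) < 1 - u ^ p := by linarith
  rw [phi]
  rw [Real.exp_sub, Real.exp_add]
  rw [show (p-1) * Real.log u = Real.log u * (p-1) by ring,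
      show (1/2 : ℝ) * Real.log (1 - u^2) = Real.log (1 - u^2) * (1/2) by ring,
      show ((p-1)/p : ℝ) * Real.log (1 - u^p) = Real.log (1 - u^p) * ((p-1)/p) by ring]
  rw [← Real.rpow_def_of_pos hu, ← Real.rpow_def_of_pos hu2, ← Real.rpow_def_of_pos hupp]
  rw [← Real.sqrt_eq_rpow]
  rw [show (1/p - 1 : ℝ) = -((p-1)/p) by field_simp; ring]
  rw [Real.rpow_neg hupp.le, div_eq_mul_inv]

lemma deriv_g_eq {p θ : ℝ} (hp : 2 ≤ p) (hθ : θ ∈ Set.Ioo 0 (Real.pi/2)) :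
    deriv (gfun p) θ = Real.exp (phi p (Real.cos θ)) := by
  have hc0 : 0 < Real.cos θ := Real.cos_pos_of_mem_Ioo
    ⟨by linarith [hθ.1, Real.pi_pos], hθ.2⟩
  have hc1 : Real.cos θ < 1 := by
    have := Real.strictAntiOn_cos (Set.left_mem_Icc.2 Real.pi_pos.le)
      ⟨hθ.1.le, by linarith [hθ.2, Real.pi_pos]⟩ hθ.1
    simpa using this
  rw [(g_hasDeriv hp hθ).deriv, exp_phi hp hc0 hc1]
  have hs : Real.sin θ = Real.sqrt (1 - Real.cos θ ^ 2) := by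
    rw [Real.sin_eq_sqrt_one_sub_cos_sq hθ.1.le (by linarith [hθ.2, Real.pi_pos])]
  rw [hs]; ring

lemma g_concave {p : ℝ} (hp : 2 ≤ p) : ConcaveOn ℝ (Set.Icc 0 (Real.pi/2)) (gfun p) := by
  have hp0 : (0:ℝ) < p := by linarith
  have hcont : Continuous (gfun p) := by
    have c1 : Continuous fun θ : ℝ => Real.cos θ ^ p := by
      rw [continuous_iff_continuousAt]
      exact fun θ => (Real.continuousAt_rpow_const _ _ (Or.inr hp0.le)).comp
        Real.continuous_cos.continuousAt
    have c2 : Continuous fun θ : ℝ => 1 - Real.cos θ ^ p := continuous_const.sub c1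
    rw [continuous_iff_continuousAt]
    exact fun θ => (Real.continuousAt_rpow_const _ _ (Or.inr (by positivity))).comp
      c2.continuousAt
  apply AntitoneOn.concaveOn_of_deriv (convex_Icc _ _) hcont.continuousOn
  · rw [interior_Icc]
    exact fun θ hθ => (g_hasDeriv hp hθ).differentiableAt.differentiableWithinAt
  · rw [interior_Icc]
    intro θ₁ h₁ θ₂ h₂ hle
    rw [deriv_g_eq hp h₁, deriv_g_eq hp h₂]
    apply Real.exp_le_exp.2
    have hpi := Real.pi_pos
    have hcos : ∀ θ : ℝ, θ ∈ Set.Ioo 0 (Real.pi/2) → Real.cos θ ∈ Set.Ioo (0:ℝ) 1 := by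
      intro θ hθ
      refine ⟨Real.cos_pos_of_mem_Ioo ⟨by linarith [hθ.1], hθ.2⟩, ?_⟩
      have := Real.strictAntiOn_cos (Set.left_mem_Icc.2 Real.pi_pos.le)
        ⟨hθ.1.le, by linarith [hθ.2]⟩ hθ.1
      simpa using this
    have hc2le : Real.cos θ₂ ≤ Real.cos θ₁ :=
      Real.cos_le_cos_of_nonneg_of_le_pi h₁.1.le (by linarith [h₂.2]) hle
    exact phi_mono hp (hcos _ h₂) (hcos _ h₁) hc2le

lemma g_zero {p : ℝ} (hp : 2 ≤ p) : gfun p 0 = 0 := by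
  rw [gfun, Real.cos_zero, Real.one_rpow, sub_self]
  exact Real.zero_rpow (by positivity)

lemma g_nonneg {p θ : ℝ} (hp : 2 ≤ p) (h1 : 0 ≤ θ) (h2 : θ ≤ Real.pi/2) :
    0 ≤ gfun p θ := by
  apply Real.rpow_nonneg
  have hc0 : 0 ≤ Real.cos θ := Real.cos_nonneg_of_mem_Icc ⟨by linarith [Real.pi_pos], h2⟩
  have := Real.rpow_le_one hc0 (Real.cos_le_one θ) (by linarith : (0:ℝ) ≤ p)
  linarith

lemma g_subadd {p β γ : ℝ} (hp : 2 ≤ p) (hβ : 0 ≤ β) (hγ : 0 ≤ γ)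
    (hsum : β + γ ≤ Real.pi/2) : gfun p (β + γ) ≤ gfun p β + gfun p γ := by
  rcases eq_or_lt_of_le (by linarith : (0:ℝ) ≤ β + γ) with h0 | h0
  · rw [← h0, g_zero hp]
    have h1 := g_nonneg hp hβ (by linarith)
    have h2 := g_nonneg hp hγ (by linarith)
    linarith
  · have hpi := Real.pi_pos
    have key : ∀ δ ε : ℝ, 0 ≤ δ → 0 ≤ ε → δ + ε = β + γ →
        (δ / (β+γ)) * gfun p (β+γ) ≤ gfun p δ := by
      intro δ ε hδ hε hδε
      have hc := (g_concave hp).2 (Set.mem_Icc.2 ⟨le_rfl, by linarith⟩)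
        (Set.mem_Icc.2 ⟨by linarith, hsum⟩)
        (show (0:ℝ) ≤ ε/(β+γ) by positivity) (show (0:ℝ) ≤ δ/(β+γ) by positivity)
        (show ε/(β+γ) + δ/(β+γ) = 1 by field_simp; linarith)
      simp only [smul_eq_mul, mul_zero, zero_add, g_zero hp] at hc
      calc δ / (β+γ) * gfun p (β+γ) ≤ gfun p (δ / (β+γ) * (β+γ)) := by
            simpa using hc
        _ = gfun p δ := by rw [div_mul_cancel₀ _ h0.ne']
    have k1 := key β γ hβ hγ rfl
    have k2 := key γ β hγ hβ (by ring)
    have : β/(β+γ) * gfun p (β+γ) + γ/(β+γ) * gfun p (β+γ) = gfun p (β+γ) := by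
      field_simp
    linarith

noncomputable def ffun (p : ℝ) : ℝ → ℝ := fun t => (1 - t ^ p) ^ (1/p)

lemma f_nonneg {p t : ℝ} (hp : 2 ≤ p) (h0 : 0 ≤ t) (h1 : t ≤ 1) : 0 ≤ ffun p t :=
  Real.rpow_nonneg (by
    have := Real.rpow_le_one h0 h1 (by linarith : (0:ℝ) ≤ p); linarith) _

lemma f_le_one {p t : ℝ} (hp : 2 ≤ p) (h0 : 0 ≤ t) (h1 : t ≤ 1) : ffun p t ≤ 1 := by
  apply Real.rpow_le_one
  · have := Real.rpow_le_one h0 h1 (by linarith : (0:ℝ) ≤ p); linarith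
  · have := Real.rpow_nonneg h0 p; linarith
  · positivity

lemma f_antitone {p s t : ℝ} (hp : 2 ≤ p) (h0 : 0 ≤ s) (hst : s ≤ t) (h1 : t ≤ 1) :
    ffun p t ≤ ffun p s := by
  apply Real.rpow_le_rpow
  · have := Real.rpow_le_one (by linarith : (0:ℝ) ≤ t) h1 (by linarith : (0:ℝ) ≤ p)
    linarith
  · have := Real.rpow_le_rpow h0 hst (by linarith : (0:ℝ) ≤ p)
    linarith
  · positivity

lemma f_eq_g {p t : ℝ} (h0 : -1 ≤ t) (h1 : t ≤ 1) :
    ffun p t = gfun p (Real.arccos t) := by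
  rw [ffun, gfun, Real.cos_arccos h0 h1]

-- t ≥ t given via sqrt; s-values use natural squares
lemma scalar_core {p a b c : ℝ} (hp : 2 ≤ p)
    (ha : 0 ≤ a) (ha1 : a ≤ 1) (hb : 0 ≤ b) (hb1 : b ≤ 1) (hc : 0 ≤ c) (hc1 : c ≤ 1)
    (hkey : b * c - Real.sqrt (1 - b ^ 2) * Real.sqrt (1 - c ^ 2) ≤ a) :
    ffun p a ≤ ffun p b + ffun p c := by
  have hp0 : (0:ℝ) < p := by linarith
  rcases lt_or_ge (b ^ 2 + c ^ 2) 1 with hcase | hcase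
  · -- obtuse case : f b + f c ≥ 1 ≥ f a
    have h1 : ∀ t : ℝ, 0 ≤ t → t ≤ 1 → 1 - t ^ 2 ≤ ffun p t := by
      intro t h0 h1
      have e1 : t ^ p ≤ t ^ (2:ℝ) := by
        rcases eq_or_lt_of_le h0 with h | h
        · rw [← h]
          rw [Real.zero_rpow hp0.ne', Real.zero_rpow (by norm_num)]
        · exact Real.rpow_le_rpow_of_exponent_ge h h1 (by linarith)
      rw [Real.rpow_two] at e1
      have e2 : 1 - t ^ 2 ≤ 1 - t ^ p := by linarith
      have htp1 : t ^ p ≤ 1 := by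
        have := Real.rpow_le_one h0 h1 (by linarith : (0:ℝ) ≤ p); linarith
      have e3 : (1 - t ^ p) ^ (1:ℝ) ≤ (1 - t ^ p) ^ (1/p) := by
        rcases eq_or_lt_of_le (show (0:ℝ) ≤ 1 - t ^ p by linarith) with h | h
        · rw [← h, Real.zero_rpow (by norm_num : (1:ℝ) ≠ 0),
            Real.zero_rpow (by positivity : (1:ℝ)/p ≠ 0)]
        · apply Real.rpow_le_rpow_of_exponent_ge h (by linarith [Real.rpow_nonneg h0 p])
          rw [div_le_one hp0]; linarith
      rw [Real.rpow_one] at e3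
      calc 1 - t ^ 2 ≤ 1 - t ^ p := e2
        _ ≤ ffun p t := e3
    have := h1 b hb hb1
    have := h1 c hc hc1
    have := f_le_one hp ha ha1
    linarith
  · -- main case
    set β := Real.arccos b with hβdef
    set γ := Real.arccos c with hγdef
    have hβmem : 0 ≤ β := Real.arccos_nonneg b
    have hγmem : 0 ≤ γ := Real.arccos_nonneg c
    have hβ2 : β ≤ Real.pi/2 := Real.arccos_le_pi_div_two.2 hb
    have hγ2 : γ ≤ Real.pi/2 := Real.arccos_le_pi_div_two.2 hc
    have hsc : Real.sin γ = Real.sqrt (1 - c ^ 2) := Real.sin_arccos c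
    have hsb : Real.sin β = Real.sqrt (1 - b ^ 2) := Real.sin_arccos b
    have hsum : β + γ ≤ Real.pi/2 := by
      have h1 : Real.sqrt (1 - c^2) ≤ b := by
        have := Real.sqrt_le_sqrt (show 1 - c^2 ≤ b^2 by linarith)
        rwa [Real.sqrt_sq hb] at this
      have h2 : Real.cos (Real.pi/2 - γ) = Real.sin γ := Real.cos_pi_div_two_sub γ
      have h3 : β ≤ Real.pi/2 - γ := by
        by_contra hcon
        push_neg at hcon
        have h5 : Real.cos β < Real.cos (Real.pi/2 - γ) :=
          Real.cos_lt_cos_of_nonneg_of_le_pi (by linarith)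
            (by linarith [Real.pi_pos, Real.arccos_le_pi b]) hcon
        rw [h2, hsc, Real.cos_arccos (by linarith) hb1] at h5
        linarith
      linarith
    have hcosadd : Real.cos (β + γ) =
        b * c - Real.sqrt (1 - b ^ 2) * Real.sqrt (1 - c ^ 2) := by
      rw [Real.cos_add, Real.cos_arccos (by linarith) hb1, Real.cos_arccos (by linarith) hc1,
        hsb, hsc]
    have ht0 : 0 ≤ Real.cos (β + γ) :=
      Real.cos_nonneg_of_mem_Icc ⟨by linarith [Real.pi_pos], hsum⟩
    have step1 : ffun p a ≤ ffun p (Real.cos (β + γ)) := by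
      apply f_antitone hp ht0 _ ha1
      rw [hcosadd]; exact hkey
    have step2 : ffun p (Real.cos (β + γ)) = gfun p (β + γ) := by
      rw [ffun, gfun]
    have step3 := g_subadd hp hβmem hγmem hsum
    rw [f_eq_g (by linarith) hb1, f_eq_g (by linarith) hc1]
    calc ffun p a ≤ gfun p (β + γ) := by rw [← step2]; exact step1
      _ ≤ gfun p β + gfun p γ := step3


lemma norm_perp_sq {H : Type*} [NormedAddCommGroup H] [InnerProductSpace ℂ H]
    (u v : H) (hu : ‖u‖ = 1) (hv : ‖v‖ = 1) :
    ‖u - ⟪v, u⟫ • v‖ ^ 2 = 1 - ‖⟪u, v⟫‖ ^ 2 := by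
  rw [@norm_sub_sq ℂ, hu, inner_smul_right, norm_smul]
  have h1 : ⟪v, u⟫ = (starRingEnd ℂ) ⟪u, v⟫ := (inner_conj_symm v u).symm
  have h2 : RCLike.re (⟪v, u⟫ * ⟪u, v⟫) = ‖⟪u, v⟫‖ ^ 2 := by
    rw [h1, RCLike.conj_mul]
    norm_cast
  rw [h2, h1]
  simp [hv, RCLike.norm_conj]
  rw [norm_inner_symm u v]
  ring

lemma vector_key {H : Type*} [NormedAddCommGroup H] [InnerProductSpace ℂ H]
    (u v w : H) (hu : ‖u‖ = 1) (hv : ‖v‖ = 1) (hw : ‖w‖ = 1) :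
    ‖⟪u, v⟫‖ * ‖⟪v, w⟫‖ - Real.sqrt (1 - ‖⟪u, v⟫‖ ^ 2) * Real.sqrt (1 - ‖⟪v, w⟫‖ ^ 2)
      ≤ ‖⟪u, w⟫‖ := by
  set e1 : H := u - ⟪v, u⟫ • v with he1
  set e2 : H := w - ⟪v, w⟫ • v with he2
  have hvv : ⟪v, v⟫ = 1 := by
    rw [inner_self_eq_norm_sq_to_K, hv]; norm_num
  have hdecomp : ⟪u, w⟫ = ⟪u, v⟫ * ⟪v, w⟫ + ⟪e1, e2⟫ := by
    rw [he1, he2]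
    simp only [inner_sub_left, inner_sub_right, inner_smul_left, inner_smul_right, hvv,
      inner_conj_symm]
    ring
  have hne1 : ‖e1‖ ^ 2 = 1 - ‖⟪u, v⟫‖ ^ 2 := by
    rw [he1, norm_perp_sq u v hu hv]
  have hne2 : ‖e2‖ ^ 2 = 1 - ‖⟪v, w⟫‖ ^ 2 := by
    rw [he2, norm_perp_sq w v hw hv, norm_inner_symm]
  have hcs : ‖⟪e1, e2⟫‖ ≤ Real.sqrt (1 - ‖⟪u, v⟫‖ ^ 2) * Real.sqrt (1 - ‖⟪v, w⟫‖ ^ 2) := by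
    have h1 := norm_inner_le_norm (𝕜 := ℂ) e1 e2
    have e1eq : ‖e1‖ = Real.sqrt (1 - ‖⟪u, v⟫‖ ^ 2) := by
      rw [← hne1, Real.sqrt_sq (norm_nonneg _)]
    have e2eq : ‖e2‖ = Real.sqrt (1 - ‖⟪v, w⟫‖ ^ 2) := by
      rw [← hne2, Real.sqrt_sq (norm_nonneg _)]
    rw [e1eq, e2eq] at h1
    exact h1
  calc ‖⟪u, v⟫‖ * ‖⟪v, w⟫‖ - Real.sqrt (1 - ‖⟪u, v⟫‖ ^ 2) * Real.sqrt (1 - ‖⟪v, w⟫‖ ^ 2)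
      ≤ ‖⟪u, v⟫ * ⟪v, w⟫‖ - ‖⟪e1, e2⟫‖ := by
        rw [norm_mul]; linarith
    _ ≤ ‖⟪u, v⟫ * ⟪v, w⟫ + ⟪e1, e2⟫‖ := by
        have := norm_add_le (⟪u, v⟫ * ⟪v, w⟫ + ⟪e1, e2⟫) (-⟪e1, e2⟫)
        simp only [add_neg_cancel_right, norm_neg] at this
        linarith
    _ = ‖⟪u, w⟫‖ := by rw [← hdecomp]

theorem dp_triangle {H : Type*} [NormedAddCommGroup H] [InnerProductSpace ℂ H]
    (x y e : H) (hx : x ≠ 0) (hy : y ≠ 0) (he : ‖e‖ = 1) (p : ℝ) (hp : 2 ≤ p) :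
    |(1 - ‖⟪x, e⟫‖ ^ p / ‖x‖ ^ p) ^ (1 / p) -
        (1 - ‖⟪y, e⟫‖ ^ p / ‖y‖ ^ p) ^ (1 / p)| ≤
      (1 - ‖⟪x, y⟫‖ ^ p / (‖x‖ ^ p * ‖y‖ ^ p)) ^ (1 / p) := by
  have hxn : (0:ℝ) < ‖x‖ := norm_pos_iff.2 hx
  have hyn : (0:ℝ) < ‖y‖ := norm_pos_iff.2 hy
  set u : H := (‖x‖⁻¹ : ℂ) • x with hu_def
  set v : H := (‖y‖⁻¹ : ℂ) • y with hv_def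
  have hun : ‖u‖ = 1 := norm_smul_inv_norm hx
  have hvn : ‖v‖ = 1 := norm_smul_inv_norm hy
  set a : ℝ := ‖⟪u, e⟫‖ with ha_def
  set b : ℝ := ‖⟪v, e⟫‖ with hb_def
  set c : ℝ := ‖⟪u, v⟫‖ with hc_def
  have ha0 : 0 ≤ a := norm_nonneg _
  have hb0 : 0 ≤ b := norm_nonneg _
  have hc0 : 0 ≤ c := norm_nonneg _
  have ha1 : a ≤ 1 := by
    have := norm_inner_le_norm (𝕜 := ℂ) u e; rwa [hun, he, one_mul] at this
  have hb1 : b ≤ 1 := by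
    have := norm_inner_le_norm (𝕜 := ℂ) v e; rwa [hvn, he, one_mul] at this
  have hc1 : c ≤ 1 := by
    have := norm_inner_le_norm (𝕜 := ℂ) u v; rwa [hun, hvn, one_mul] at this
  -- rewrite the goal in terms of a b c
  have hainner : a = ‖x‖⁻¹ * ‖(⟪x, e⟫ : ℂ)‖ := by
    rw [ha_def, hu_def, inner_smul_left, norm_mul]
    congr 1
    simp [RCLike.norm_conj, abs_of_pos hxn]
  have hbinner : b = ‖y‖⁻¹ * ‖(⟪y, e⟫ : ℂ)‖ := by
    rw [hb_def, hv_def, inner_smul_left, norm_mul]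
    congr 1
    simp [RCLike.norm_conj, abs_of_pos hyn]
  have hcinner : c = ‖x‖⁻¹ * (‖y‖⁻¹ * ‖(⟪x, y⟫ : ℂ)‖) := by
    rw [hc_def, hu_def, hv_def, inner_smul_left, inner_smul_right, norm_mul, norm_mul]
    simp [RCLike.norm_conj, abs_of_pos hxn, abs_of_pos hyn]
  have hgoal_a : ‖⟪x, e⟫‖ ^ p / ‖x‖ ^ p = a ^ p := by
    rw [hainner, Real.mul_rpow (by positivity) (norm_nonneg _),
      Real.inv_rpow hxn.le]
    ring
  have hgoal_b : ‖⟪y, e⟫‖ ^ p / ‖y‖ ^ p = b ^ p := by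
    rw [hbinner, Real.mul_rpow (by positivity) (norm_nonneg _),
      Real.inv_rpow hyn.le]
    ring
  have hgoal_c : ‖⟪x, y⟫‖ ^ p / (‖x‖ ^ p * ‖y‖ ^ p) = c ^ p := by
    rw [hcinner, Real.mul_rpow (by positivity) (by positivity),
      Real.mul_rpow (by positivity) (norm_nonneg _), Real.inv_rpow hxn.le,
      Real.inv_rpow hyn.le]
    ring
  rw [hgoal_a, hgoal_b, hgoal_c]
  have key1 : ffun p a ≤ ffun p b + ffun p c := by
    apply scalar_core hp ha0 ha1 hb0 hb1 hc0 hc1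
    have hv1 := vector_key u v e hun hvn he
    calc b * c - Real.sqrt (1 - b^2) * Real.sqrt (1 - c^2)
        = c * b - Real.sqrt (1 - c^2) * Real.sqrt (1 - b^2) := by ring
      _ ≤ a := hv1
  have key2 : ffun p b ≤ ffun p a + ffun p c := by
    apply scalar_core hp hb0 hb1 ha0 ha1 hc0 hc1
    have hv2 := vector_key v u e hvn hun he
    rw [norm_inner_symm v u, ← hc_def, ← hb_def, ← ha_def] at hv2
    calc a * c - Real.sqrt (1 - a^2) * Real.sqrt (1 - c^2)
        = c * a - Real.sqrt (1 - c^2) * Real.sqrt (1 - a^2) := by ring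
      _ ≤ b := hv2
  rw [abs_sub_le_iff]
  constructor
  · have : ffun p a - ffun p b ≤ ffun p c := by linarith
    exact this
  · have : ffun p b - ffun p a ≤ ffun p c := by linarith
    exact this
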